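/- Let ω ∈ S_n and P ∈ Π(ω). If i < j and ω⁻¹(i) < ω⁻¹(j), then there is a directed path from i to j in the contact graph P♯, i.e., i ⪯_P j. -/

import Mathlib

/-- A pipe dream of size `n` on the triangular shape, with boxes indexed by pairs
`(r, c)` of a row `r` and a column `c`, both `0`-indexed (rows increase southwards,
columns increase eastwards).  `cross r c = true` means that box `(r, c)` contains a
crossing tile; all other boxes contain elbow tiles.  Crossings are only allowed in
the full boxes of the triangular shape, i.e. those with `r + c + 2 ≤ n` (the boxes
with `r + c + 1 = n` are the half-boxes on the antidiagonal, which are forced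
elbows).  The `n` pipes enter horizontally on the left side in rows `0, …, n-1` and
exit vertically on the top side in columns `0, …, n-1`; pipe `k` is the pipe
entering at row `k`.  An elbow tile connects the west edge of its box to the north
edge (the pipe travelling through this elbow passes northwest of the tile) and the
south edge to the east edge (this pipe passes southeast of the tile); a crossing
tile connects west to east and south to north. -/
structure PipeDream (n : ℕ) where
  cross : ℕ → ℕ → Bool
  inShape : ∀ r c : ℕ, cross r c = true → r + c + 2 ≤ n

namespace PipeDream

variable {n : ℕ}

/-- `(P.pipes r c).1` is the label of the pipe entering box `(r, c)` from the west,
and `(P.pipes r c).2` is the label of the pipe entering box `(r, c)` from the south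
(junk value `0` if there is no box below box `(r, c)` in the triangular shape). -/
def pipes (P : PipeDream n) : ℕ → ℕ → ℕ × ℕ
  | r, c =>
    (if hc : c = 0 then r
      else if P.cross r (c - 1) then (pipes P r (c - 1)).1 else (pipes P r (c - 1)).2,
     if hr : r + c + 2 ≤ n then
        if P.cross (r + 1) c then (pipes P (r + 1) c).2 else (pipes P (r + 1) c).1
      else 0)
  termination_by r c => (n - r) + c
  decreasing_by all_goals omega

/-- The pipe entering box `(r, c)` from the west (travelling eastwards). -/
def west (P : PipeDream n) (r c : ℕ) : ℕ := (pipes P r c).1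

/-- The pipe entering box `(r, c)` from the south (travelling northwards). -/
def south (P : PipeDream n) (r c : ℕ) : ℕ := (pipes P r c).2

/-- The pipe exiting on the top side at column `c`. -/
def exitPipe (P : PipeDream n) (c : ℕ) : ℕ :=
  if P.cross 0 c then P.south 0 c else P.west 0 c

/-- `P` has exit permutation `ω`, i.e. the pipe exiting at column `c` is `ω c`;
equivalently, pipe `k` exits at column `ω⁻¹ k`. -/
def HasExitPerm (P : PipeDream n) (ω : Equiv.Perm (Fin n)) : Prop :=
  ∀ c : Fin n, P.exitPipe c.val = (ω c).val

/-- `P` is reduced: any two of its pipes cross at most once. -/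
def Reduced (P : PipeDream n) : Prop :=
  ∀ r c r' c' : ℕ, P.cross r c = true → P.cross r' c' = true → (r, c) ≠ (r', c') →
    ¬ ((P.west r c = P.west r' c' ∧ P.south r c = P.south r' c') ∨
        (P.west r c = P.south r' c' ∧ P.south r c = P.west r' c'))

/-- The arcs of the contact graph `P♯` of `P`: there is one arc for each elbow
contact of `P` (an elbow tile in a full box of the triangular shape), oriented from
the pipe passing northwest of the contact (the one travelling west-to-north) to the
pipe passing southeast of it (the one travelling south-to-east). -/
def Arc (P : PipeDream n) (i j : ℕ) : Prop :=
  ∃ r c : ℕ, r + c + 2 ≤ n ∧ P.cross r c = false ∧ P.west r c = i ∧ P.south r c = j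

/-- `P` is acyclic: its contact graph has no directed cycle. -/
def Acyclic (P : PipeDream n) : Prop := ∀ i : ℕ, ¬ Relation.TransGen P.Arc i i

/-- `i ⪯_P j` : there is a directed path (possibly empty) from `i` to `j` in the
contact graph of `P`. -/
def Path (P : PipeDream n) (i j : ℕ) : Prop := Relation.ReflTransGen P.Arc i j

/-- `π` is a linear extension of `P` : `π⁻¹ i < π⁻¹ j` for every arc `i → j` of the
contact graph of `P`. -/
def LinExt (P : PipeDream n) (π : Equiv.Perm (Fin n)) : Prop :=
  ∀ i j : Fin n, P.Arc i.val j.val → π⁻¹ i < π⁻¹ j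

/-- There is a contact (an elbow tile in a full box) between pipes `i` and `j`
at box `b`. -/
def ContactAt (P : PipeDream n) (i j : ℕ) (b : ℕ × ℕ) : Prop :=
  b.1 + b.2 + 2 ≤ n ∧ P.cross b.1 b.2 = false ∧
    ((P.west b.1 b.2 = i ∧ P.south b.1 b.2 = j) ∨
      (P.west b.1 b.2 = j ∧ P.south b.1 b.2 = i))

/-- `P'` is obtained from `P` by the flip exchanging the contact at box `b` with the
crossing at box `b'` (a contact and a crossing between the same two pipes). -/
def IsFlip (P P' : PipeDream n) (b b' : ℕ × ℕ) : Prop :=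
  b ≠ b' ∧
  P.cross b.1 b.2 = false ∧ P.cross b'.1 b'.2 = true ∧
  P'.cross b.1 b.2 = true ∧ P'.cross b'.1 b'.2 = false ∧
  (∀ r c : ℕ, (r, c) ≠ b → (r, c) ≠ b' → P.cross r c = P'.cross r c) ∧
  ((P.west b.1 b.2 = P.west b'.1 b'.2 ∧ P.south b.1 b.2 = P.south b'.1 b'.2) ∨
    (P.west b.1 b.2 = P.south b'.1 b'.2 ∧ P.south b.1 b.2 = P.west b'.1 b'.2))

/-- There is an increasing flip from `P` to `P'`: a flip exchanging a contact at a
box `b` weakly southwest of the box `b'` of the corresponding crossing. -/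
def IncFlip (P P' : PipeDream n) : Prop :=
  ∃ b b' : ℕ × ℕ, P.IsFlip P' b b' ∧ b'.1 ≤ b.1 ∧ b.2 ≤ b'.2

end PipeDream

/-- The weak order on permutations of `Fin n` : `π ≤ σ` if and only if
`Inv(π) ⊆ Inv(σ)`, where `Inv(π)` is the set of pairs `(i, j)` with `i < j` and
`π⁻¹ i > π⁻¹ j`. -/
def WeakLE {n : ℕ} (π σ : Equiv.Perm (Fin n)) : Prop :=
  ∀ i j : Fin n, i < j → π⁻¹ j < π⁻¹ i → σ⁻¹ j < σ⁻¹ i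

/-! Induction on `n`, deleting the top row. Every pipe exiting at the top, except pipe `0`,
enters the top row from below, and the entries from below are (up to the shift of labels) the
exits of the smaller pipe dream. Tracing the top row, two exits either come from two entries in
the same relative order, or the two pipes cross in the top row. This shows by induction that
inversions of the exit word are crossings, and that non-inversions are joined by paths: the
elbows of the top row supply arcs, and a configuration in which two pipes would cross both in
the top row and below it is excluded by reducedness. -/

namespace PipeDream

variable {n : ℕ}

section Row

variable (P : PipeDream n) {r a b c d u : ℕ}

theorem west_col_zero (r : ℕ) : P.west r 0 = r := by
  rw [west, pipes]; simp

theorem west_col_succ (r c : ℕ) :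
    P.west r (c + 1) = if P.cross r c then P.west r c else P.south r c := by
  rw [west, pipes]; simp [west, south]

theorem south_eq (r c : ℕ) :
    P.south r c = if r + c + 2 ≤ n then
      (if P.cross (r + 1) c then P.south (r + 1) c else P.west (r + 1) c) else 0 := by
  rw [south, pipes]; split <;> simp_all [west, south]

variable {P}

theorem west_col_succ_of_cross (h : P.cross r c = true) : P.west r (c + 1) = P.west r c := by
  simp [west_col_succ, h]

theorem west_col_succ_of_elbow (h : P.cross r c = false) : P.west r (c + 1) = P.south r c := by
  simp [west_col_succ, h]

theorem le_west_of_lt_south (hs : ∀ c, r + c + 2 ≤ n → r < P.south r c) :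
    ∀ c, r + c + 1 ≤ n → r ≤ P.west r c
  | 0, _ => (P.west_col_zero r).ge
  | c + 1, h => by
    rw [west_col_succ]
    split
    · exact le_west_of_lt_south hs c (by omega)
    · exact (hs c (by omega)).le

theorem lt_south : ∀ {r c : ℕ}, r + c + 2 ≤ n → r < P.south r c
  | r, c, h => by
    rw [south_eq, if_pos h]
    split
    · next hc =>
      have := P.inShape _ _ hc
      have := lt_south (r := r + 1) (c := c) (by omega)
      omega
    · exact le_west_of_lt_south (fun _ h' => lt_south h') c (by omega)
termination_by r => n - r
decreasing_by all_goals omega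

theorem le_west (h : r + c + 1 ≤ n) : r ≤ P.west r c :=
  le_west_of_lt_south (fun _ => lt_south) c h

theorem west_eq_or_exists_south_eq (hab : a ≤ b) :
    P.west r b = P.west r a ∨ ∃ u, a ≤ u ∧ u < b ∧ P.south r u = P.west r b := by
  induction b, hab using Nat.le_induction with
  | base => exact .inl rfl
  | succ b hab ih =>
    cases hc : P.cross r b
    · exact .inr ⟨b, hab, b.lt_succ_self, (west_col_succ_of_elbow hc).symm⟩
    · rw [west_col_succ_of_cross hc]
      exact ih.imp_right fun ⟨u, hau, hub, hu⟩ => ⟨u, hau, by omega, hu⟩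

theorem exists_south_eq_west_of_ne (h : P.west r c ≠ r) : ∃ u < c, P.south r u = P.west r c := by
  rcases west_eq_or_exists_south_eq (P := P) (r := r) c.zero_le with h0 | ⟨u, -, huc, hu⟩
  · exact absurd (h0.trans (P.west_col_zero r)) h
  · exact ⟨u, huc, hu⟩

theorem lt_west_of_elbow (hu : P.cross r u = false) (hub : u < b) (hb : r + b + 1 ≤ n) :
    r < P.west r b := by
  rcases west_eq_or_exists_south_eq (P := P) (r := r) hub with h | ⟨v, -, hvb, hv⟩
  · rw [h, west_col_succ_of_elbow hu]; exact lt_south (by omega)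
  · rw [← hv]; exact lt_south (by omega)

theorem path_west (hd : r + d + 1 ≤ n) (hcd : c ≤ d) : P.Path (P.west r c) (P.west r d) := by
  induction d, hcd using Nat.le_induction with
  | base => exact .refl
  | succ d hcd ih =>
    cases hc : P.cross r d
    · rw [west_col_succ_of_elbow hc]
      exact (ih (by omega)).tail ⟨r, d, by omega, hc, rfl, rfl⟩
    · rw [west_col_succ_of_cross hc]
      exact ih (by omega)

end Row

def CrossingAt (P : PipeDream n) (i j : ℕ) (b : ℕ × ℕ) : Prop :=
  P.cross b.1 b.2 = true ∧
    ((P.west b.1 b.2 = i ∧ P.south b.1 b.2 = j) ∨ (P.west b.1 b.2 = j ∧ P.south b.1 b.2 = i))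

theorem CrossingAt.symm {P : PipeDream n} {i j : ℕ} {b : ℕ × ℕ} (h : P.CrossingAt i j b) :
    P.CrossingAt j i b :=
  ⟨h.1, h.2.symm⟩

theorem crossingAt_of_cross {P : PipeDream n} {r c : ℕ} (h : P.cross r c = true) :
    P.CrossingAt (P.west r c) (P.south r c) (r, c) :=
  ⟨h, .inl ⟨rfl, rfl⟩⟩

theorem reduced_iff {P : PipeDream n} :
    P.Reduced ↔ ∀ i j b b', P.CrossingAt i j b → P.CrossingAt i j b' → b = b' := by
  constructor
  · rintro hred i j b b' ⟨hc, hp⟩ ⟨hc', hp'⟩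
    by_contra hne
    exact hred b.1 b.2 b'.1 b'.2 hc hc' hne (by omega)
  · intro h r c r' c' hc hc' hne hpair
    exact hne (h _ _ _ _ (crossingAt_of_cross hc) ⟨hc', by dsimp only; omega⟩)

/-- Delete the top row; pipe `k + 1` of `P` becomes pipe `k`. -/
def peel (P : PipeDream (n + 1)) : PipeDream n where
  cross r c := P.cross (r + 1) c
  inShape r c h := by have := P.inShape (r + 1) c h; omega

section Peel

variable {P : PipeDream (n + 1)} {r c i j : ℕ}

theorem peel_west_south (P : PipeDream (n + 1)) : ∀ r c : ℕ,
    (peel P).west r c = P.west (r + 1) c - 1 ∧ (peel P).south r c = P.south (r + 1) c - 1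
  | r, c => by
    constructor
    · match c with
      | 0 => simp only [west_col_zero]; omega
      | c + 1 =>
        rw [west_col_succ, west_col_succ]
        change (if P.cross (r + 1) c then _ else _) = _
        split
        · exact (peel_west_south P r c).1
        · exact (peel_west_south P r c).2
    · rw [south_eq (peel P) r c, south_eq P (r + 1) c]
      by_cases h : r + c + 2 ≤ n
      · rw [if_pos h, if_pos (by omega : r + 1 + c + 2 ≤ n + 1)]
        change (if P.cross (r + 2) c then _ else _) = (if P.cross (r + 2) c then _ else _) - 1
        split_ifs
        · exact (peel_west_south P (r + 1) c).2
        · exact (peel_west_south P (r + 1) c).1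
      · rw [if_neg h, if_neg (by omega : ¬ r + 1 + c + 2 ≤ n + 1)]
termination_by r c => (n - r) + c
decreasing_by all_goals omega

theorem peel_west_add_one (h : r + c + 1 ≤ n) : (peel P).west r c + 1 = P.west (r + 1) c := by
  have := le_west (P := P) (r := r + 1) (c := c) (by omega)
  have := (peel_west_south P r c).1
  omega

theorem peel_south_add_one (h : r + c + 2 ≤ n) : (peel P).south r c + 1 = P.south (r + 1) c := by
  have := lt_south (P := P) (r := r + 1) (c := c) (by omega)
  have := (peel_west_south P r c).2
  omega

theorem exitPipe_peel_add_one (hc : c < n) : (peel P).exitPipe c + 1 = P.south 0 c := by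
  rw [exitPipe, south_eq P 0 c, if_pos (by omega : 0 + c + 2 ≤ n + 1)]
  change (if P.cross 1 c then _ else _) + 1 = if P.cross 1 c then _ else _
  split_ifs
  · next h => exact peel_south_add_one (by have := P.inShape 1 c h; omega)
  · exact peel_west_add_one (by omega)

theorem arc_of_peel (h : (peel P).Arc i j) : P.Arc (i + 1) (j + 1) := by
  obtain ⟨r, c, hrc, hc, rfl, rfl⟩ := h
  exact ⟨r + 1, c, by omega, hc, (peel_west_add_one (by omega)).symm,
    (peel_south_add_one hrc).symm⟩

theorem path_of_peel (h : (peel P).Path i j) : P.Path (i + 1) (j + 1) :=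
  Relation.ReflTransGen.lift (· + 1) (fun _ _ => arc_of_peel) _ _ h

theorem crossingAt_of_peel {x : ℕ × ℕ} (h : (peel P).CrossingAt i j x) :
    P.CrossingAt (i + 1) (j + 1) (x.1 + 1, x.2) := by
  obtain ⟨hc, hp⟩ := h
  have := (peel P).inShape _ _ hc
  have hw := peel_west_add_one (P := P) (r := x.1) (c := x.2) (by omega)
  have hs := peel_south_add_one (P := P) (r := x.1) (c := x.2) (by omega)
  exact ⟨hc, by dsimp only; omega⟩

theorem Reduced.peel (hred : P.Reduced) : (peel P).Reduced := by
  rw [reduced_iff] at hred ⊢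
  intro i j x x' h h'
  have := hred _ _ _ _ (crossingAt_of_peel h) (crossingAt_of_peel h')
  simp only [Prod.mk.injEq, add_left_inj] at this
  exact Prod.ext this.1 this.2

end Peel

section TopRow

variable {P : PipeDream (n + 1)} {a b c e : ℕ}

theorem exitPipe_of_cross (h : P.cross 0 c = true) : P.exitPipe c = P.south 0 c := by
  simp [exitPipe, h]

theorem exitPipe_of_elbow (h : P.cross 0 c = false) : P.exitPipe c = P.west 0 c := by
  simp [exitPipe, h]

theorem exitPipe_eq_zero_or_exists_south (he : e ≤ n) :
    P.exitPipe e = 0 ∨ ∃ c ≤ e, c < n ∧ P.south 0 c = P.exitPipe e := by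
  cases hc : P.cross 0 e
  · rw [exitPipe_of_elbow hc]
    by_cases h0 : P.west 0 e = 0
    · exact .inl h0
    · obtain ⟨u, hue, hu⟩ := exists_south_eq_west_of_ne h0
      exact .inr ⟨u, hue.le, by omega, hu⟩
  · exact .inr ⟨e, le_rfl, by have := P.inShape 0 e hc; omega, (exitPipe_of_cross hc).symm⟩

open Finset in
/-- The exits of `P` are among `0` and the `n` entries of the top row from below, so
injectivity of the `n + 1` exits forces injectivity of those entries. -/
theorem injOn_south_zero (hinj : Set.InjOn P.exitPipe (Set.Iio (n + 1))) :
    Set.InjOn (P.south 0) (Set.Iio n) := by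
  have hsub : (range (n + 1)).image P.exitPipe ⊆ insert 0 ((range n).image (P.south 0)) := by
    intro x hx
    obtain ⟨e, he, rfl⟩ := mem_image.1 hx
    rcases exitPipe_eq_zero_or_exists_south (P := P) (Nat.lt_succ_iff.1 (mem_range.1 he)) with
      h0 | ⟨c, -, hc, hs⟩
    · simp [h0]
    · exact mem_insert_of_mem (mem_image.2 ⟨c, mem_range.2 hc, hs⟩)
  have hcard := (card_le_card hsub).trans (card_insert_le _ _)
  rw [card_image_of_injOn (by simpa using hinj), card_range] at hcard
  have hcard' : ((range n).image (P.south 0)).card = (range n).card :=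
    le_antisymm card_image_le (by rw [card_range]; omega)
  simpa using card_image_iff.1 hcard'

theorem injOn_exitPipe_peel (hinj : Set.InjOn P.exitPipe (Set.Iio (n + 1))) :
    Set.InjOn (peel P).exitPipe (Set.Iio n) := by
  intro c hc c' hc' h
  apply injOn_south_zero hinj hc hc'
  rw [← exitPipe_peel_add_one hc, ← exitPipe_peel_add_one hc', h]

theorem exists_south_eq_exitPipe_or (hab : a < b) (hb : b ≤ n) :
    (∃ c, a < c ∧ c < n ∧ P.south 0 c = P.exitPipe b) ∨ P.west 0 (a + 1) = P.exitPipe b := by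
  cases hc : P.cross 0 b
  · rw [exitPipe_of_elbow hc]
    rcases west_eq_or_exists_south_eq (P := P) (r := 0) (show a + 1 ≤ b by omega) with
      h | ⟨u, hau, hub, hu⟩
    · exact .inr h.symm
    · exact .inl ⟨u, by omega, by omega, hu⟩
  · exact .inl ⟨b, hab, by have := P.inShape 0 b hc; omega, (exitPipe_of_cross hc).symm⟩

theorem exists_south_pair_or_crossing (hab : a < b) (hb : b ≤ n) (hx : P.exitPipe a ≠ 0)
    (hxy : P.exitPipe a ≠ P.exitPipe b) :
    (∃ c c', c < c' ∧ c' < n ∧ P.south 0 c = P.exitPipe a ∧ P.south 0 c' = P.exitPipe b) ∨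
      (P.cross 0 a = true ∧ P.west 0 a = P.exitPipe b) := by
  obtain ⟨c, hca, -, hc⟩ := (exitPipe_eq_zero_or_exists_south (by omega)).resolve_left hx
  rcases exists_south_eq_exitPipe_or hab hb with ⟨c', hac', hc', hs⟩ | hw
  · exact .inl ⟨c, c', by omega, hc', hc, hs⟩
  · cases ha : P.cross 0 a
    · rw [west_col_succ_of_elbow ha] at hw
      have hca' : c ≠ a := by rintro rfl; exact hxy (hc.symm.trans hw)
      exact .inl ⟨c, a, by omega, by omega, hc, hw⟩
    · rw [west_col_succ_of_cross ha] at hw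
      exact .inr ⟨rfl, hw⟩

end TopRow

def InversionsCross (P : PipeDream n) : Prop :=
  ∀ a b, a < b → b < n → P.exitPipe b < P.exitPipe a →
    ∃ x, P.CrossingAt (P.exitPipe a) (P.exitPipe b) x

def NoninversionsConnect (P : PipeDream n) : Prop :=
  ∀ a b, a < b → b < n → P.exitPipe a < P.exitPipe b → P.Path (P.exitPipe a) (P.exitPipe b)

section Induction

variable {P : PipeDream (n + 1)} {c c' : ℕ}

theorem InversionsCross.crossingAt_south (h : (peel P).InversionsCross) (hcc' : c < c')
    (hc' : c' < n) (hs : P.south 0 c' < P.south 0 c) :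
    ∃ r d, P.CrossingAt (P.south 0 c) (P.south 0 c') (r + 1, d) := by
  rw [← exitPipe_peel_add_one (hcc'.trans hc'), ← exitPipe_peel_add_one hc'] at hs ⊢
  obtain ⟨x, hx⟩ := h c c' hcc' hc' (by omega)
  exact ⟨x.1, x.2, crossingAt_of_peel hx⟩

theorem NoninversionsConnect.path_south (h : (peel P).NoninversionsConnect) (hcc' : c < c')
    (hc' : c' < n) (hs : P.south 0 c < P.south 0 c') : P.Path (P.south 0 c) (P.south 0 c') := by
  rw [← exitPipe_peel_add_one (hcc'.trans hc'), ← exitPipe_peel_add_one hc'] at hs ⊢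
  exact path_of_peel (h c c' hcc' hc' (by omega))

theorem InversionsCross.of_peel (h : (peel P).InversionsCross) : P.InversionsCross := by
  intro a b hab hb hlt
  rcases exists_south_pair_or_crossing hab (by omega) (by omega) hlt.ne' with
    ⟨c, c', hcc', hc', hsc, hsc'⟩ | ⟨ha, hw⟩
  · obtain ⟨r, d, hx⟩ := h.crossingAt_south hcc' hc' (by omega)
    rw [hsc, hsc'] at hx
    exact ⟨_, hx⟩
  · have hx := (crossingAt_of_cross ha).symm
    rw [hw, ← exitPipe_of_cross ha] at hx
    exact ⟨_, hx⟩

/-- At a crossing of the top row, the horizontal pipe `p ≠ 0` entered the row at an elbow from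
below, left of the crossing; so the smaller pipe dream decides between `p` and the vertical pipe,
and a second crossing below the top row is excluded by reducedness. -/
theorem west_lt_south_and_path_of_cross (hred : P.Reduced)
    (hinj : Set.InjOn P.exitPipe (Set.Iio (n + 1))) (hI : (peel P).InversionsCross)
    (hN : (peel P).NoninversionsConnect) (hc : P.cross 0 c = true) (hw : P.west 0 c ≠ 0) :
    P.west 0 c < P.south 0 c ∧ P.Path (P.west 0 c) (P.south 0 c) := by
  have hcn : c < n := by have := P.inShape 0 c hc; omega
  obtain ⟨u, huc, hu⟩ := exists_south_eq_west_of_ne hw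
  rw [← hu]
  rcases lt_trichotomy (P.south 0 u) (P.south 0 c) with hlt | heq | hgt
  · exact ⟨hlt, hN.path_south huc hcn hlt⟩
  · exact absurd (injOn_south_zero hinj (huc.trans hcn) hcn heq) huc.ne
  · obtain ⟨r, d, hx⟩ := hI.crossingAt_south huc hcn hgt
    have htop := crossingAt_of_cross hc
    rw [← hu] at htop
    simpa using (reduced_iff.1 hred) _ _ _ _ hx htop

theorem NoninversionsConnect.of_peel (hred : P.Reduced)
    (hinj : Set.InjOn P.exitPipe (Set.Iio (n + 1))) (hI : (peel P).InversionsCross)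
    (hN : (peel P).NoninversionsConnect) : P.NoninversionsConnect := by
  intro a b hab hb hlt
  have key := fun c => west_lt_south_and_path_of_cross (c := c) hred hinj hI hN
  cases ha : P.cross 0 a
  · have hrow := path_west (P := P) (r := 0) (by omega) hab.le
    rw [exitPipe_of_elbow ha]
    cases hb' : P.cross 0 b
    · rwa [exitPipe_of_elbow hb']
    · rw [exitPipe_of_cross hb']
      exact hrow.trans (key b hb' (lt_west_of_elbow ha hab (by omega)).ne').2
  · have hx : P.exitPipe a ≠ 0 := by
      rw [exitPipe_of_cross ha]; exact (lt_south (by have := P.inShape 0 a ha; omega)).ne'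
    rcases exists_south_pair_or_crossing hab (by omega) hx hlt.ne with
      ⟨c, c', hcc', hc', hsc, hsc'⟩ | ⟨-, hw⟩
    · rw [← hsc, ← hsc']
      exact hN.path_south hcc' hc' (by omega)
    · have := (key a ha (by omega)).1
      rw [hw, ← exitPipe_of_cross ha] at this
      omega

end Induction

theorem inversionsCross :
    ∀ {n : ℕ} (P : PipeDream n), Set.InjOn P.exitPipe (Set.Iio n) → P.InversionsCross
  | 0, _, _ => fun _ _ _ hb => absurd hb (Nat.not_lt_zero _)
  | _ + 1, P, hinj => (inversionsCross (peel P) (injOn_exitPipe_peel hinj)).of_peel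

theorem noninversionsConnect : ∀ {n : ℕ} (P : PipeDream n), P.Reduced →
    Set.InjOn P.exitPipe (Set.Iio n) → P.NoninversionsConnect
  | 0, _, _, _ => fun _ _ _ hb => absurd hb (Nat.not_lt_zero _)
  | _ + 1, P, hred, hinj =>
    have hinj' := injOn_exitPipe_peel hinj
    .of_peel hred hinj (inversionsCross (peel P) hinj') (noninversionsConnect (peel P) hred.peel hinj')

theorem HasExitPerm.injOn_exitPipe {P : PipeDream n} {ω : Equiv.Perm (Fin n)}
    (h : P.HasExitPerm ω) : Set.InjOn P.exitPipe (Set.Iio n) := by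
  intro e he e' he' hee'
  rw [h ⟨e, he⟩, h ⟨e', he'⟩] at hee'
  exact congrArg Fin.val (ω.injective (Fin.ext hee'))

theorem HasExitPerm.exitPipe_inv {P : PipeDream n} {ω : Equiv.Perm (Fin n)}
    (h : P.HasExitPerm ω) (k : Fin n) : P.exitPipe (ω⁻¹ k) = k := by
  simpa using h (ω⁻¹ k)

end PipeDream

/-- Let `ω ∈ S_n` and `P ∈ Π(ω)`.  If `i < j` and `ω⁻¹ i < ω⁻¹ j`,
then there is a directed path from `i` to `j` in the contact graph `P♯`. -/
theorem path_of_noncrossing (n : ℕ) (ω : Equiv.Perm (Fin n)) (P : PipeDream n)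
    (hred : P.Reduced) (hexit : P.HasExitPerm ω)
    (i j : Fin n) (hij : i < j) (hw : ω⁻¹ i < ω⁻¹ j) :
    P.Path i.val j.val := by
  have h := P.noninversionsConnect hred hexit.injOn_exitPipe (ω⁻¹ i) (ω⁻¹ j) hw (ω⁻¹ j).isLt
    (by rwa [hexit.exitPipe_inv, hexit.exitPipe_inv])
  rwa [hexit.exitPipe_inv, hexit.exitPipe_inv] at h
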